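/- If x, y, z are mutually orthogonal octonions, then x(ȳz) = −z(ȳx), and consequently the three-fold cross product simplifies to x × y × z = x(ȳz). -/

import Mathlib

open Quaternion
open scoped InnerProductSpace

noncomputable section

/-- The octonions `𝕆`, realized as pairs of quaternions carrying the `L²` (Euclidean)
inner product and norm of `ℝ⁸ ≅ ℍ × ℍ`. -/
abbrev Oct : Type := WithLp 2 (ℍ[ℝ] × ℍ[ℝ])

namespace Oct

/-- Build an octonion from a pair of quaternions. -/
def mk (a b : ℍ[ℝ]) : Oct := (WithLp.equiv 2 (ℍ[ℝ] × ℍ[ℝ])).symm (a, b)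

/-- Cayley–Dickson multiplication: `(a,b)·(c,d) = (ac − d̄b, bc̄ + da)`. -/
def omul (x y : Oct) : Oct :=
  mk (x.ofLp.1 * y.ofLp.1 - star y.ofLp.2 * x.ofLp.2) (x.ofLp.2 * star y.ofLp.1 + y.ofLp.2 * x.ofLp.1)

/-- Octonion conjugation: `(a,b)‾ = (ā, −b)`. -/
def oconj (x : Oct) : Oct := mk (star x.ofLp.1) (-x.ofLp.2)

/-- The unit octonion `1 = (1,0)`. -/
def oone : Oct := mk 1 0

/-- Imaginary part: `Im x = (x − x̄)/2`. -/
def oim (x : Oct) : Oct := (2⁻¹ : ℝ) • (x - oconj x)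

/-- An octonion is imaginary if `x̄ = −x`. -/
def IsImaginary (x : Oct) : Prop := oconj x = -x

/-- Two-fold cross product `x × y = Im(ȳx)`. -/
def cross2 (x y : Oct) : Oct := oim (omul (oconj y) x)

/-- Three-fold cross product `x × y × z = ½(x(ȳz) − z(ȳx))`. -/
def cross3 (x y z : Oct) : Oct :=
  (2⁻¹ : ℝ) • (omul x (omul (oconj y) z) - omul z (omul (oconj y) x))

/-- A Cayley 4-plane: a 4-dimensional real linear subspace of `𝕆` closed under the
three-fold cross product. -/
def IsCayley (ζ : Submodule ℝ Oct) : Prop :=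
  Module.finrank ℝ ζ = 4 ∧ ∀ x ∈ ζ, ∀ y ∈ ζ, ∀ z ∈ ζ, cross3 x y z ∈ ζ

/-- Real coordinates of an octonion with respect to the standard basis
`((1,0),(i,0),(j,0),(k,0),(0,1),(0,i),(0,j),(0,k))`. -/
def coord (x : Oct) : Fin 8 → ℝ :=
  ![x.ofLp.1.re, x.ofLp.1.imI, x.ofLp.1.imJ, x.ofLp.1.imK, x.ofLp.2.re, x.ofLp.2.imI, x.ofLp.2.imJ, x.ofLp.2.imK]

/-- The octonion with the given real coordinates in the standard basis. -/
def ofCoords (g : Fin 8 → ℝ) : Oct :=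
  mk ⟨g 0, g 1, g 2, g 3⟩ ⟨g 4, g 5, g 6, g 7⟩

end Oct

/-
For arbitrary octonions `x(ȳz) + z(ȳx) = 2⟨x,y⟩z + 2⟨y,z⟩x − 2⟨z,x⟩y`; in the Cayley–Dickson
model this is a polynomial identity in the 24 real coordinates of `x, y, z`. Mutual
orthogonality kills the right-hand side, so `z(ȳx) = −x(ȳz)`, and the three-fold cross product
`½(x(ȳz) − z(ȳx))` collapses to `x(ȳz)`.
-/

namespace Oct

@[simp]
theorem fst_mk (a b : ℍ[ℝ]) : (mk a b).ofLp.1 = a := rfl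

@[simp]
theorem snd_mk (a b : ℍ[ℝ]) : (mk a b).ofLp.2 = b := rfl

theorem ext {x y : Oct} (h₁ : x.ofLp.1 = y.ofLp.1) (h₂ : x.ofLp.2 = y.ofLp.2) : x = y :=
  WithLp.ofLp_injective 2 (Prod.ext h₁ h₂)

theorem inner_eq (x y : Oct) :
    ⟪x, y⟫_ℝ = x.ofLp.1.re * y.ofLp.1.re + x.ofLp.1.imI * y.ofLp.1.imI
      + x.ofLp.1.imJ * y.ofLp.1.imJ + x.ofLp.1.imK * y.ofLp.1.imK
      + (x.ofLp.2.re * y.ofLp.2.re + x.ofLp.2.imI * y.ofLp.2.imI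
      + x.ofLp.2.imJ * y.ofLp.2.imJ + x.ofLp.2.imK * y.ofLp.2.imK) := by
  rw [WithLp.prod_inner_apply, inner_def, inner_def]
  simp only [re_mul, re_star, imI_star, imJ_star, imK_star]
  ring

theorem omul_omul_oconj_add_omul_omul_oconj (x y z : Oct) :
    omul x (omul (oconj y) z) + omul z (omul (oconj y) x) =
      (2 * ⟪x, y⟫_ℝ) • z + (2 * ⟪y, z⟫_ℝ) • x - (2 * ⟪z, x⟫_ℝ) • y := by
  simp only [inner_eq]
  refine ext (Quaternion.ext _ _ ?_ ?_ ?_ ?_) (Quaternion.ext _ _ ?_ ?_ ?_ ?_) <;>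
    simp only [omul, oconj, fst_mk, snd_mk, WithLp.ofLp_add, WithLp.ofLp_sub, WithLp.ofLp_smul,
      Prod.fst_add, Prod.snd_add, Prod.fst_sub, Prod.snd_sub, Prod.smul_fst, Prod.smul_snd,
      re_mul, imI_mul, imJ_mul, imK_mul, re_star, imI_star, imJ_star, imK_star, re_add, imI_add,
      imJ_add, imK_add, re_sub, imI_sub, imJ_sub, imK_sub, re_neg, imI_neg, imJ_neg, imK_neg,
      re_smul, imI_smul, imJ_smul, imK_smul, smul_eq_mul] <;>
    ring

end Oct

/-- for mutually orthogonal octonions `x, y, z` one has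
`x(ȳz) = −z(ȳx)`, hence `x × y × z = x(ȳz)`. -/
theorem cross3_eq_of_mutually_orthogonal
    (x y z : Oct)
    (hxy : ⟪x, y⟫_ℝ = 0) (hyz : ⟪y, z⟫_ℝ = 0) (hzx : ⟪z, x⟫_ℝ = 0) :
    Oct.omul x (Oct.omul (Oct.oconj y) z) = -Oct.omul z (Oct.omul (Oct.oconj y) x) ∧
      Oct.cross3 x y z = Oct.omul x (Oct.omul (Oct.oconj y) z) := by
  have anticomm :
      Oct.omul x (Oct.omul (Oct.oconj y) z) = -Oct.omul z (Oct.omul (Oct.oconj y) x) := by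
    rw [eq_neg_iff_add_eq_zero, Oct.omul_omul_oconj_add_omul_omul_oconj, hxy, hyz, hzx]
    simp
  refine ⟨anticomm, ?_⟩
  rw [Oct.cross3, anticomm]
  module
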